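/- For any group G and any k ≥ 1, the set FC_k(G) = {x ∈ G : |x|_k is finite} is a subgroup of G. -/

import Mathlib

/-- Left-normed commutator `[a,b] = a⁻¹ b⁻¹ a b`. -/
def cmt {G : Type*} [Group G] (a b : G) : G := a⁻¹ * b⁻¹ * a * b

/-- Iterated left-normed commutator `[a, x₁, ..., x_k]`. -/
def itCmt {G : Type*} [Group G] (a : G) (l : List G) : G := l.foldl cmt a

/-- `Xset a k` is the set of commutators `[a, x₁, ..., x_k]` with `xᵢ ∈ G`. -/
def Xset {G : Type*} [Group G] (a : G) (k : ℕ) : Set G :=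
  {b | ∃ l : List G, l.length = k ∧ itCmt a l = b}

/-!
By induction on the length of the commutator, `[a⁻¹, x₁, …, x_k]` is the inverse of a conjugate
of some `[a, y₁, …, y_k]`, and `[ab, x₁, …, x_k]` is a conjugate of some `[a, y₁, …, y_k]` times
some `[b, z₁, …, z_k]`. For `k ≥ 1` conjugates stay under control: for `c = [d, g]` one has
`w⁻¹ c w = [d, w]⁻¹ [d, g w]`. So `Xset a⁻¹ k` and `Xset (a * b) k` lie in pointwise products of
`Xset a k`, `Xset b k` and their inverses.
-/

open Pointwise

section

variable {G : Type*} [Group G]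

@[simp]
lemma itCmt_append_singleton (a : G) (l : List G) (g : G) :
    itCmt a (l ++ [g]) = cmt (itCmt a l) g := by
  simp [itCmt, List.foldl_append]

lemma itCmt_one (l : List G) : itCmt (1 : G) l = 1 := by
  induction l using List.reverseRecOn with
  | nil => rfl
  | append_singleton l g ih => simp [ih, cmt]

lemma Xset_one (k : ℕ) : Xset (1 : G) k = {1} := by
  ext y
  constructor
  · rintro ⟨l, -, rfl⟩
    exact itCmt_one l
  · rintro rfl
    exact ⟨List.replicate k 1, List.length_replicate, itCmt_one _⟩

lemma conj_mem_Xset_inv_mul {a : G} {k : ℕ} (hk : 1 ≤ k) {c : G} (hc : c ∈ Xset a k) (w : G) :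
    w⁻¹ * c * w ∈ (Xset a k)⁻¹ * Xset a k := by
  obtain ⟨l, hl, rfl⟩ := hc
  rcases List.eq_nil_or_concat l with rfl | ⟨l, g, rfl⟩
  · simp at hl
    omega
  rw [List.concat_eq_append]
  have hlen : l.length + 1 = k := by simpa using hl
  refine ⟨(itCmt a (l ++ [w]))⁻¹, ?_, itCmt a (l ++ [g * w]),
    ⟨l ++ [g * w], by simp [hlen], rfl⟩, ?_⟩
  · rw [Set.mem_inv, inv_inv]
    exact ⟨l ++ [w], by simp [hlen], rfl⟩
  · simp only [itCmt_append_singleton, cmt]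
    group

lemma itCmt_inv_eq_conj (a : G) (l : List G) :
    ∃ w : G, ∃ l' : List G, l'.length = l.length ∧
      itCmt a⁻¹ l = (w⁻¹ * itCmt a l' * w)⁻¹ := by
  induction l using List.reverseRecOn with
  | nil => exact ⟨1, [], rfl, by simp [itCmt]⟩
  | append_singleton l g ih =>
    obtain ⟨w, l', hlen, heq⟩ := ih
    refine ⟨(itCmt a l')⁻¹ * w, l' ++ [w * g * w⁻¹], by simp [hlen], ?_⟩
    simp only [itCmt_append_singleton, heq, cmt]
    group

lemma itCmt_mul_eq_conj_mul (a b : G) (l : List G) :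
    ∃ w : G, ∃ l₁ l₂ : List G, l₁.length = l.length ∧ l₂.length = l.length ∧
      itCmt (a * b) l = w⁻¹ * itCmt a l₁ * w * itCmt b l₂ := by
  induction l using List.reverseRecOn with
  | nil => exact ⟨1, [], [], rfl, rfl, by simp [itCmt]⟩
  | append_singleton l g ih =>
    obtain ⟨w, l₁, l₂, h₁, h₂, heq⟩ := ih
    refine ⟨w * itCmt b l₂, l₁ ++ [w * g * w⁻¹], l₂ ++ [g], by simp [h₁], by simp [h₂], ?_⟩
    simp only [itCmt_append_singleton, heq, cmt]
    group

lemma Xset_inv_subset {k : ℕ} (hk : 1 ≤ k) (a : G) :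
    Xset a⁻¹ k ⊆ ((Xset a k)⁻¹ * Xset a k)⁻¹ := by
  rintro y ⟨l, hl, rfl⟩
  obtain ⟨w, l', hlen, heq⟩ := itCmt_inv_eq_conj a l
  rw [Set.mem_inv, heq, inv_inv]
  exact conj_mem_Xset_inv_mul hk ⟨l', hlen.trans hl, rfl⟩ w

lemma Xset_mul_subset {k : ℕ} (hk : 1 ≤ k) (a b : G) :
    Xset (a * b) k ⊆ (Xset a k)⁻¹ * Xset a k * Xset b k := by
  rintro y ⟨l, hl, rfl⟩
  obtain ⟨w, l₁, l₂, h₁, h₂, heq⟩ := itCmt_mul_eq_conj_mul a b l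
  rw [heq]
  exact Set.mul_mem_mul (conj_mem_Xset_inv_mul hk ⟨l₁, h₁.trans hl, rfl⟩ w)
    ⟨l₂, h₂.trans hl, rfl⟩

end

theorem stmt_8 {G : Type*} [Group G] (k : ℕ) (hk : 1 ≤ k) :
    ∃ H : Subgroup G, (H : Set G) = {x : G | (Xset x k).Finite} := by
  refine ⟨{ carrier := {x : G | (Xset x k).Finite}
            mul_mem' := fun {a b} ha hb ↦ ?_
            one_mem' := ?_
            inv_mem' := fun {a} ha ↦ ?_ }, rfl⟩
  · exact ((ha.inv.mul ha).mul hb).subset (Xset_mul_subset hk a b)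
  · show (Xset (1 : G) k).Finite
    rw [Xset_one]
    exact Set.finite_singleton 1
  · exact (ha.inv.mul ha).inv.subset (Xset_inv_subset hk a)
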